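/- arXiv:1706.08431 — 2 statements merged into one kernel-verified Lean document; each statement's English description precedes it below -/
import Mathlib

section
/- Let Φ be a random k-SAT formula on n variables and m clauses drawn from the random k-SAT model with probability vector p sorted non-decreasingly (p_1 ≤ p_2 ≤ … ≤ p_n), where k ≥ 2 is a fixed integer and m/n = Ω(1). If p_{n−k+1} = Ω((log n / n)^{1/k}), then Φ is unsatisfiable with high probability. -/
open Finset Filter
open scoped BigOperators Classical

namespace PLSAT

/-- A clause on `n` variables with `k` literals: each literal is a variable index
together with a sign (`true` = positive occurrence, `false` = negated). -/
abbrev Clause (n k : ℕ) := Fin k → Fin n × Bool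

/-- A CNF formula with `m` clauses, each with `k` literals on `n` variables. -/
abbrev Formula (n m k : ℕ) := Fin m → Clause n k

/-- Assignment `A` satisfies clause `c`. -/
def ClauseSat {n k : ℕ} (A : Fin n → Bool) (c : Clause n k) : Prop :=
  ∃ i, A (c i).1 = (c i).2

/-- Assignment `A` satisfies formula `Φ`. -/
def Sat {n m k : ℕ} (A : Fin n → Bool) (Φ : Formula n m k) : Prop :=
  ∀ j, ClauseSat A (Φ j)

def Satisfiable {n m k : ℕ} (Φ : Formula n m k) : Prop := ∃ A, Sat A Φ

/-- `p` is a probability vector. -/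
def IsProbVec (n : ℕ) (p : Fin n → ℝ) : Prop := (∀ i, 0 ≤ p i) ∧ ∑ i, p i = 1

/-- Normalizing constant: the probability that `k` i.i.d. draws from `p` are pairwise
distinct (sum over ordered injective tuples of the product of probabilities). -/
noncomputable def Z (n k : ℕ) (p : Fin n → ℝ) : ℝ :=
  ∑ v : Fin k → Fin n, if Function.Injective v then ∏ i, p (v i) else 0

/-- Probability of sampling the (ordered, signed) clause `c`: the `k` variables are
i.i.d. from `p` conditioned on being pairwise distinct, and each sign is uniform. -/
noncomputable def clauseProb (n k : ℕ) (p : Fin n → ℝ) (c : Clause n k) : ℝ :=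
  (if Function.Injective (fun i => (c i).1) then ∏ i, p (c i).1 else 0) / (2 ^ k * Z n k p)

/-- Probability of sampling the formula `Φ` (clauses independent). -/
noncomputable def formulaProb (n m k : ℕ) (p : Fin n → ℝ) (Φ : Formula n m k) : ℝ :=
  ∏ j, clauseProb n k p (Φ j)

/-- Probability of the event `P` under the random `k`-SAT model. -/
noncomputable def Pr (n m k : ℕ) (p : Fin n → ℝ) (P : Formula n m k → Prop) : ℝ :=
  ∑ Φ : Formula n m k, if P Φ then formulaProb n m k p Φ else 0

/-- Smallest weight `w₁` (weights are sorted non-decreasingly). -/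
noncomputable def wmin (n : ℕ) (w : Fin n → ℝ) : ℝ :=
  if h : 0 < n then w ⟨0, h⟩ else 0

/-- Largest weight `wₙ`. -/
noncomputable def wmax (n : ℕ) (w : Fin n → ℝ) : ℝ :=
  if h : 0 < n then w ⟨n - 1, Nat.sub_lt h one_pos⟩ else 0

/-- Empirical tail function `F(x) = |{i : wᵢ ≥ x}| / n`. -/
noncomputable def tailF (n : ℕ) (w : Fin n → ℝ) (x : ℝ) : ℝ :=
  ((Finset.univ.filter fun i => x ≤ w i).card : ℝ) / n

/-- Strict empirical tail function `F^>(x) = |{i : wᵢ > x}| / n`. -/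
noncomputable def tailFgt (n : ℕ) (w : Fin n → ℝ) (x : ℝ) : ℝ :=
  ((Finset.univ.filter fun i => x < w i).card : ℝ) / n

/-- The family `w` of weight sequences follows a general power law with exponent `β`
and tail constants `α₁ ≤ α₂`: the weights are sorted non-decreasingly and positive,
`w₁ = Θ(1)`, `wₙ = Θ(n^{1/(β-1)})`, and for all `x ∈ [w₁, wₙ]` it holds
`α₁ x^{1-β} ≤ F(x) ≤ α₂ x^{1-β}`. -/
structure IsPowerLawFamily (β α₁ α₂ : ℝ) (w : (n : ℕ) → Fin n → ℝ) : Prop where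
  mono : ∀ n, Monotone (w n)
  pos : ∀ n i, 0 < w n i
  α₁_pos : 0 < α₁
  α₁_le_α₂ : α₁ ≤ α₂
  wmin_theta : ∃ c₁ c₂ : ℝ, 0 < c₁ ∧ ∀ᶠ n in atTop,
      c₁ ≤ wmin n (w n) ∧ wmin n (w n) ≤ c₂
  wmax_theta : ∃ d₁ d₂ : ℝ, 0 < d₁ ∧ ∀ᶠ n : ℕ in atTop,
      d₁ * (n : ℝ) ^ (1 / (β - 1)) ≤ wmax n (w n) ∧
      wmax n (w n) ≤ d₂ * (n : ℝ) ^ (1 / (β - 1))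
  tail : ∀ n, 0 < n → ∀ x : ℝ, wmin n (w n) ≤ x → x ≤ wmax n (w n) →
      α₁ * x ^ (1 - β) ≤ tailF n (w n) x ∧ tailF n (w n) x ≤ α₂ * x ^ (1 - β)

/-- Probabilities induced by weights: `pᵢ = wᵢ / ∑ⱼ wⱼ`. -/
noncomputable def plp (n : ℕ) (w : Fin n → ℝ) (i : Fin n) : ℝ := w i / ∑ j, w j

/-!
Let `v` be the `k` heaviest variables. A satisfying assignment `A` falsifies the clause on `v`
with signs `¬ A ∘ v`, so that clause is missing from `Φ`. Each clause on `v` has probability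
at least `q = ∏ᵢ p(vᵢ) / 2^k ≥ c^k log n / (2^k n)`, so a union bound over the `2^k` sign
patterns gives `Pr[Φ satisfiable] ≤ 2^k (1 - q)^m ≤ 2^k e^{-qm}`, and `qm = Ω(log n)` because
`m = Ω(n)`.
-/

section Model

variable {n m k : ℕ} {p : Fin n → ℝ}

lemma Z_le_one (hp : IsProbVec n p) : Z n k p ≤ 1 :=
  calc Z n k p ≤ ∑ v : Fin k → Fin n, ∏ i, p (v i) :=
        Finset.sum_le_sum fun v _ => by
          split_ifs
          exacts [le_rfl, Finset.prod_nonneg fun _ _ => hp.1 _]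
    _ = 1 := by rw [← Fintype.sum_pow, hp.2, one_pow]

lemma Z_nonneg (hp : ∀ i, 0 ≤ p i) : 0 ≤ Z n k p :=
  Finset.sum_nonneg fun _ _ => ite_nonneg (Finset.prod_nonneg fun _ _ => hp _) le_rfl

lemma Z_pos_of_injective (hp : ∀ i, 0 ≤ p i) {v : Fin k → Fin n}
    (hv : Function.Injective v) (hpos : 0 < ∏ i, p (v i)) : 0 < Z n k p :=
  calc 0 < ∏ i, p (v i) := hpos
    _ = if Function.Injective v then ∏ i, p (v i) else 0 := (if_pos hv).symm
    _ ≤ Z n k p := Finset.single_le_sum (f := fun w : Fin k → Fin n =>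
          if Function.Injective w then ∏ i, p (w i) else 0)
        (fun _ _ => ite_nonneg (Finset.prod_nonneg fun _ _ => hp _) le_rfl) (Finset.mem_univ v)

lemma clauseProb_nonneg (hp : ∀ i, 0 ≤ p i) (c : Clause n k) : 0 ≤ clauseProb n k p c := by
  have hZ := Z_nonneg (k := k) hp
  exact div_nonneg (ite_nonneg (Finset.prod_nonneg fun _ _ => hp _) le_rfl) (by positivity)

lemma formulaProb_nonneg (hp : ∀ i, 0 ≤ p i) (Φ : Formula n m k) :
    0 ≤ formulaProb n m k p Φ :=
  Finset.prod_nonneg fun _ _ => clauseProb_nonneg hp _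

lemma sum_clauseProb (hZ : Z n k p ≠ 0) : ∑ c : Clause n k, clauseProb n k p c = 1 := by
  have hnum : ∑ c : Clause n k,
      (if Function.Injective (fun i => (c i).1) then ∏ i, p (c i).1 else 0) = 2 ^ k * Z n k p := by
    rw [← (Equiv.arrowProdEquivProdArrow (Fin k) (fun _ => Fin n) (fun _ => Bool)).symm.sum_comp,
      Fintype.sum_prod_type]
    simp [Z, Finset.mul_sum]
  simp only [clauseProb]
  rw [← Finset.sum_div, hnum, div_self (by positivity)]

lemma clauseProb_le_one (hp : ∀ i, 0 ≤ p i) (hZ : Z n k p ≠ 0) (c : Clause n k) :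
    clauseProb n k p c ≤ 1 :=
  sum_clauseProb hZ ▸ Finset.single_le_sum (fun c _ => clauseProb_nonneg hp c) (Finset.mem_univ c)

lemma Pr_forall_clause (Q : Clause n k → Prop) :
    Pr n m k p (fun Φ => ∀ j, Q (Φ j)) = (∑ c, if Q c then clauseProb n k p c else 0) ^ m := by
  simp only [Fintype.sum_pow, Fintype.prod_ite_zero, Pr, formulaProb]
  congr!

lemma Pr_forall_ne (hZ : Z n k p ≠ 0) (c₀ : Clause n k) :
    Pr n m k p (fun Φ => ∀ j, Φ j ≠ c₀) = (1 - clauseProb n k p c₀) ^ m := by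
  rw [Pr_forall_clause (fun c => c ≠ c₀), ← sum_clauseProb hZ]
  congr 1
  rw [← Finset.sum_erase_eq_sub (Finset.mem_univ c₀), ← Finset.filter_ne', Finset.sum_filter]
  congr!

lemma Pr_le_sum_of_imp_exists {ι : Type*} [Fintype ι] (hp : ∀ i, 0 ≤ p i)
    {P : Formula n m k → Prop} {Q : ι → Formula n m k → Prop} (h : ∀ Φ, P Φ → ∃ s, Q s Φ) :
    Pr n m k p P ≤ ∑ s, Pr n m k p (Q s) := by
  simp only [Pr]
  rw [Finset.sum_comm]
  refine Finset.sum_le_sum fun Φ _ => ?_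
  have hterm : ∀ s, 0 ≤ if Q s Φ then formulaProb n m k p Φ else 0 := fun s =>
    ite_nonneg (formulaProb_nonneg hp Φ) le_rfl
  split_ifs with hP
  · obtain ⟨s, hs⟩ := h Φ hP
    exact (if_pos hs).symm.le.trans
      (Finset.single_le_sum (fun s _ => hterm s) (Finset.mem_univ s))
  · exact Finset.sum_nonneg fun s _ => hterm s

def signedClause (v : Fin k → Fin n) (s : Fin k → Bool) : Clause n k := fun i => (v i, s i)

lemma clauseProb_signedClause {v : Fin k → Fin n} (hv : Function.Injective v)
    (s : Fin k → Bool) :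
    clauseProb n k p (signedClause v s) = (∏ i, p (v i)) / (2 ^ k * Z n k p) :=
  congrArg (· / _) (if_pos hv)

lemma exists_signedClause_notMem_of_satisfiable (v : Fin k → Fin n) {Φ : Formula n m k}
    (hΦ : Satisfiable Φ) : ∃ s, ∀ j, Φ j ≠ signedClause v s := by
  obtain ⟨A, hA⟩ := hΦ
  refine ⟨fun i => !A (v i), fun j hj => ?_⟩
  obtain ⟨i, hi⟩ := hA j
  simp [hj, signedClause] at hi

lemma Pr_satisfiable_le_exp (hp : IsProbVec n p) {v : Fin k → Fin n}
    (hv : Function.Injective v) (hpos : 0 < ∏ i, p (v i)) :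
    Pr n m k p (fun Φ => Satisfiable Φ) ≤ 2 ^ k * Real.exp (-(m * ((∏ i, p (v i)) / 2 ^ k))) := by
  have hZ := Z_pos_of_injective hp.1 hv hpos
  set q := (∏ i, p (v i)) / (2 ^ k * Z n k p)
  have hq_le_one : q ≤ 1 := by
    simpa only [clauseProb_signedClause hv] using
      clauseProb_le_one hp.1 hZ.ne' (signedClause v fun _ => true)
  have hq_ge : (∏ i, p (v i)) / 2 ^ k ≤ q := by
    rw [div_le_div_iff_of_pos_left hpos (by positivity) (by positivity)]
    exact mul_le_of_le_one_right (by positivity) (Z_le_one hp)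
  calc Pr n m k p (fun Φ => Satisfiable Φ)
      ≤ ∑ s, Pr n m k p (fun Φ => ∀ j, Φ j ≠ signedClause v s) :=
        Pr_le_sum_of_imp_exists hp.1 fun _ => exists_signedClause_notMem_of_satisfiable v
    _ = 2 ^ k * (1 - q) ^ m := by
        simp [Pr_forall_ne hZ.ne', clauseProb_signedClause hv, q]
    _ ≤ 2 ^ k * Real.exp (-q) ^ m := by
        gcongr
        exact Real.one_sub_le_exp_neg q
    _ ≤ 2 ^ k * Real.exp (-(m * ((∏ i, p (v i)) / 2 ^ k))) := by
        rw [← Real.exp_nat_mul, mul_neg]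
        gcongr

end Model

def lastVars (n k : ℕ) (h : k ≤ n) (i : Fin k) : Fin n := ⟨n - k + i, by omega⟩

lemma lastVars_injective {n k : ℕ} (h : k ≤ n) : Function.Injective (lastVars n k h) :=
  fun a b hab => Fin.ext (by simpa [lastVars] using hab)

lemma pow_mul_le_prod_of_le_mul_rpow {k : ℕ} (hk : k ≠ 0) {c x : ℝ} (hc : 0 ≤ c) (hx : 0 ≤ x)
    {f : Fin k → ℝ} (hf : ∀ i, c * x ^ ((1 : ℝ) / k) ≤ f i) : c ^ k * x ≤ ∏ i, f i := by
  calc c ^ k * x = ∏ _i : Fin k, c * x ^ ((1 : ℝ) / k) := by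
        rw [Finset.prod_const, Finset.card_fin, mul_pow, one_div, Real.rpow_inv_natCast_pow hx hk]
    _ ≤ ∏ i, f i := Finset.prod_le_prod (fun _ _ => by positivity) fun i _ => hf i

/-- If the `k` most frequent variables are sufficiently common, namely
`p_{n-k+1} = Ω((log n / n)^{1/k})` (with `p` sorted non-decreasingly), and `m/n = Ω(1)`,
then the random `k`-SAT formula is unsatisfiable with high probability. -/
theorem power_law_unsat_of_heavy_variables (k : ℕ) (hk : 2 ≤ k)
    (m : ℕ → ℕ) (p : (n : ℕ) → Fin n → ℝ)
    (hprob : ∀ n, IsProbVec n (p n))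
    (hsorted : ∀ n, Monotone (p n))
    (hm : ∃ c : ℝ, 0 < c ∧ ∀ᶠ n : ℕ in atTop, c * (n : ℝ) ≤ (m n : ℝ))
    (hpk : ∃ c : ℝ, 0 < c ∧ ∀ᶠ n : ℕ in atTop, ∀ h : k ≤ n,
      c * (Real.log n / n) ^ ((1 : ℝ) / k) ≤ p n ⟨n - k, by omega⟩) :
    ∃ δ : ℝ, 0 < δ ∧ ∃ C : ℝ, ∀ᶠ n : ℕ in atTop,
      Pr n (m n) k (p n) (fun Φ => Satisfiable Φ) ≤ C * (n : ℝ) ^ (-δ) := by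
  obtain ⟨c₁, hc₁, hm⟩ := hm
  obtain ⟨c, hc, hpk⟩ := hpk
  refine ⟨c₁ * (c ^ k / 2 ^ k), by positivity, 2 ^ k, ?_⟩
  filter_upwards [hm, hpk, eventually_ge_atTop k, eventually_gt_atTop 1]
    with n hmn hpn hkn hn1
  have hn : (1 : ℝ) < n := by exact_mod_cast hn1
  have hx : 0 < Real.log n / n := div_pos (Real.log_pos hn) (by linarith)
  have hheavy : c ^ k * (Real.log n / n) ≤ ∏ i, p n (lastVars n k hkn i) :=
    pow_mul_le_prod_of_le_mul_rpow (by omega) hc.le hx.le fun i =>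
      (hpn hkn).trans (hsorted n (Fin.mk_le_mk.2 (Nat.le_add_right _ _)))
  refine (Pr_satisfiable_le_exp (hprob n) (lastVars_injective hkn)
    ((by positivity : 0 < c ^ k * (Real.log n / n)).trans_le hheavy)).trans ?_
  rw [Real.rpow_def_of_pos (by linarith), mul_neg]
  gcongr 2 ^ k * Real.exp (-?_)
  calc Real.log n * (c₁ * (c ^ k / 2 ^ k)) = c₁ * n * (c ^ k * (Real.log n / n) / 2 ^ k) := by
        field_simp
    _ ≤ m n * ((∏ i, p n (lastVars n k hkn i)) / 2 ^ k) := by gcongr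

end PLSAT
end

section
/- Let w_1 ≤ … ≤ w_n be general power-law weights with exponent β > 2, with induced probabilities p_i := w_i/∑_j w_j, and let I be a random index with Pr[I = i] = p_i. Then, uniformly for all w ∈ [w_1, w_n], Pr[w_I ≥ w] = Θ(w^{2−β}). -/
open Finset Filter
open scoped BigOperators Classical

namespace PLSAT

/-! The lower bound is immediate: at least `α₁ n x ^ (1 - β)` indices have `wᵢ ≥ x`, each
contributing weight at least `x`. For the upper bound, split `[x, wₙ]` into the dyadic shells
`[2 ^ k x, 2 ^ (k + 1) x)`: the weights in the `k`-th shell sum to at most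
`2 ^ (k + 1) x · α₂ n (2 ^ k x) ^ (1 - β)`, which is geometric in `k` because `β > 2`, so the whole
tail weighs `O(n x ^ (2 - β))`. At `x = w₁ = Θ(1)` the same two bounds show that the total weight
`∑ⱼ wⱼ` is `Θ(n)`, and dividing gives the claim. -/

theorem rpow_one_sub_mul_self {x : ℝ} (hx : 0 < x) (β : ℝ) : x ^ (1 - β) * x = x ^ (2 - β) := by
  rw [← Real.rpow_add_one hx.ne']
  ring_nf

/-- `2 A ∑ₖ (2 ^ (2 - β)) ^ k`, the sum of the bounds on the dyadic shells. -/
noncomputable def tailSumConst (β A : ℝ) : ℝ := 2 * A / (1 - 2 ^ (2 - β))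

theorem one_sub_two_rpow_pos {β : ℝ} (hβ : 2 < β) : 0 < 1 - (2 : ℝ) ^ (2 - β) :=
  sub_pos.mpr (Real.rpow_lt_one_of_one_lt_of_neg one_lt_two (by linarith))

theorem tailSumConst_pos {β A : ℝ} (hβ : 2 < β) (hA : 0 < A) : 0 < tailSumConst β A :=
  div_pos (by linarith) (one_sub_two_rpow_pos hβ)

theorem tailSumConst_nonneg {β A : ℝ} (hβ : 2 < β) (hA : 0 ≤ A) : 0 ≤ tailSumConst β A :=
  div_nonneg (by linarith) (one_sub_two_rpow_pos hβ).le

theorem tailSumConst_mul_natCast (β A : ℝ) (n : ℕ) :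
    tailSumConst β (A * n) = tailSumConst β A * n := by
  rw [tailSumConst, tailSumConst]
  ring

theorem shell_add_tailSumConst_mul_rpow {β A y : ℝ} (hβ : 2 < β) (hy : 0 < y) :
    2 * y * (A * y ^ (1 - β)) + tailSumConst β A * (2 * y) ^ (2 - β) =
      tailSumConst β A * y ^ (2 - β) := by
  have hC : tailSumConst β A * (1 - 2 ^ (2 - β)) = 2 * A :=
    div_mul_cancel₀ _ (one_sub_two_rpow_pos hβ).ne'
  rw [Real.mul_rpow zero_le_two hy.le, ← rpow_one_sub_mul_self hy]
  linear_combination -(y ^ (1 - β) * y) * hC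

section TailSum

variable {ι : Type*} [Fintype ι] (w : ι → ℝ)

noncomputable def tailSum (x : ℝ) : ℝ := ∑ i ∈ univ.filter (fun i => x ≤ w i), w i

variable {w}

theorem tailSum_eq_zero {x : ℝ} (h : ∀ i, w i < x) : tailSum w x = 0 :=
  Finset.sum_eq_zero fun i hi => absurd (Finset.mem_filter.mp hi).2 (not_le.mpr (h i))

theorem tailSum_eq_sum {x : ℝ} (h : ∀ i, x ≤ w i) : tailSum w x = ∑ i, w i := by
  rw [tailSum, Finset.filter_true_of_mem fun i _ => h i]

theorem mul_card_le_tailSum (x : ℝ) : x * #{i | x ≤ w i} ≤ tailSum w x := by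
  rw [mul_comm, ← nsmul_eq_mul]
  exact Finset.card_nsmul_le_sum _ _ _ fun i hi => (Finset.mem_filter.mp hi).2

theorem tailSum_le_two_mul_card_add {x : ℝ} (hx : 0 ≤ x) :
    tailSum w x ≤ 2 * x * #{i | x ≤ w i} + tailSum w (2 * x) := by
  set s := univ.filter fun i => x ≤ w i
  have hupper : s.filter (fun i => 2 * x ≤ w i) = univ.filter fun i => 2 * x ≤ w i := by
    rw [Finset.filter_filter]
    exact Finset.filter_congr fun i _ => ⟨And.right, fun h => ⟨by linarith, h⟩⟩
  have hlower : ∑ i ∈ s.filter (fun i => ¬ 2 * x ≤ w i), w i ≤ 2 * x * #s := by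
    calc ∑ i ∈ s.filter (fun i => ¬ 2 * x ≤ w i), w i
        ≤ #(s.filter fun i => ¬ 2 * x ≤ w i) • (2 * x) :=
          Finset.sum_le_card_nsmul _ _ _ fun i hi => (not_le.mp (Finset.mem_filter.mp hi).2).le
      _ ≤ 2 * x * #s := by
          rw [nsmul_eq_mul, mul_comm]
          gcongr
          exact Finset.filter_subset _ _
  calc tailSum w x = tailSum w (2 * x) + ∑ i ∈ s.filter (fun i => ¬ 2 * x ≤ w i), w i := by
        rw [tailSum, ← Finset.sum_filter_add_sum_filter_not s (fun i => 2 * x ≤ w i), hupper]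
        rfl
    _ ≤ 2 * x * #s + tailSum w (2 * x) := by linarith

theorem tailSum_le_of_card_le {β A M x : ℝ} (hβ : 2 < β) (hA : 0 ≤ A) (hM : ∀ i, w i ≤ M)
    (hcard : ∀ y, x ≤ y → y ≤ M → (#{i | y ≤ w i} : ℝ) ≤ A * y ^ (1 - β)) (hx : 0 < x) :
    tailSum w x ≤ tailSumConst β A * x ^ (2 - β) := by
  have hC := tailSumConst_nonneg hβ hA
  -- induct on the number `K` of dyadic shells needed to pass the largest weight
  obtain ⟨K, hK⟩ := pow_unbounded_of_one_lt (M / x) one_lt_two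
  rw [div_lt_iff₀ hx] at hK
  induction K generalizing x with
  | zero =>
    rw [tailSum_eq_zero fun i => (hM i).trans_lt (by simpa using hK)]
    positivity
  | succ K ih =>
    rcases lt_or_ge M x with hMx | hxM
    · rw [tailSum_eq_zero fun i => (hM i).trans_lt hMx]
      positivity
    have hnext := ih (x := 2 * x) (fun y hy => hcard y (by linarith)) (by positivity)
      (by rw [pow_succ] at hK; linarith)
    calc tailSum w x ≤ 2 * x * #{i | x ≤ w i} + tailSum w (2 * x) :=
          tailSum_le_two_mul_card_add hx.le
      _ ≤ 2 * x * (A * x ^ (1 - β)) + tailSumConst β A * (2 * x) ^ (2 - β) := by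
          gcongr
          exact hcard x le_rfl hxM
      _ = tailSumConst β A * x ^ (2 - β) := shell_add_tailSumConst_mul_rpow hβ hx

end TailSum

section PowerLawWeights

variable {n : ℕ} {v : Fin n → ℝ}

theorem wmin_le (hv : Monotone v) (i : Fin n) : wmin n v ≤ v i := by
  rw [wmin, dif_pos i.pos]
  exact hv (Fin.le_def.mpr (Nat.zero_le _))

theorem le_wmax (hv : Monotone v) (i : Fin n) : v i ≤ wmax n v := by
  rw [wmax, dif_pos i.pos]
  exact hv (Fin.le_def.mpr (Nat.le_sub_one_of_lt i.isLt))

theorem sum_plp_filter_eq (x : ℝ) :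
    ∑ i ∈ univ.filter (fun i => x ≤ v i), plp n v i = tailSum v x / ∑ j, v j :=
  (Finset.sum_div _ _ _).symm

theorem card_filter_eq_tailF_mul (hn : 0 < n) (x : ℝ) :
    (#{i | x ≤ v i} : ℝ) = tailF n v x * n := by
  rw [tailF, div_mul_cancel₀ _ (by positivity)]

variable {β α₁ α₂ x : ℝ}

theorem tailSum_le_of_tailF_le (hβ : 2 < β) (hα₂ : 0 ≤ α₂) (hn : 0 < n) (hv : Monotone v)
    (htail : ∀ y, wmin n v ≤ y → y ≤ wmax n v → tailF n v y ≤ α₂ * y ^ (1 - β))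
    (hx : 0 < x) (hx₁ : wmin n v ≤ x) :
    tailSum v x ≤ tailSumConst β α₂ * n * x ^ (2 - β) := by
  rw [← tailSumConst_mul_natCast]
  refine tailSum_le_of_card_le hβ (by positivity) (le_wmax hv) (fun y hxy hy => ?_) hx
  calc (#{i | y ≤ v i} : ℝ) = tailF n v y * n := card_filter_eq_tailF_mul hn y
    _ ≤ α₂ * y ^ (1 - β) * n := by gcongr; exact htail y (hx₁.trans hxy) hy
    _ = α₂ * n * y ^ (1 - β) := by ring

theorem le_tailSum_of_le_tailF (hn : 0 < n) (hx : 0 < x)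
    (htail : α₁ * x ^ (1 - β) ≤ tailF n v x) : α₁ * n * x ^ (2 - β) ≤ tailSum v x :=
  calc α₁ * n * x ^ (2 - β) = x * (α₁ * x ^ (1 - β) * n) := by
        rw [← rpow_one_sub_mul_self hx]; ring
    _ ≤ x * #{i | x ≤ v i} := by
        rw [card_filter_eq_tailF_mul hn]
        gcongr
    _ ≤ tailSum v x := mul_card_le_tailSum x

theorem sum_plp_filter_bounds {c₁ : ℝ} (hβ : 2 < β) (hα₂ : 0 < α₂)
    (hn : 0 < n) (hv : Monotone v) (hc₁ : 0 < c₁) (hmin : c₁ ≤ wmin n v)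
    (htail : ∀ y, wmin n v ≤ y → y ≤ wmax n v →
      α₁ * y ^ (1 - β) ≤ tailF n v y ∧ tailF n v y ≤ α₂ * y ^ (1 - β))
    (hx₁ : wmin n v ≤ x) (hx₂ : x ≤ wmax n v) :
    α₁ / (tailSumConst β α₂ * c₁ ^ (2 - β)) * x ^ (2 - β) ≤
        ∑ i ∈ univ.filter (fun i => x ≤ v i), plp n v i ∧
      ∑ i ∈ univ.filter (fun i => x ≤ v i), plp n v i ≤
        tailSumConst β α₂ / c₁ * x ^ (2 - β) := by
  set C := tailSumConst β α₂
  have hC : 0 < C := tailSumConst_pos hβ hα₂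
  have hx : 0 < x := hc₁.trans_le (hmin.trans hx₁)
  have hupper := fun y hy₁ hy₂ => (htail y hy₁ hy₂).2
  have htotal_lower : c₁ * n ≤ ∑ j, v j :=
    calc c₁ * n ≤ #(univ : Finset (Fin n)) • wmin n v := by
          rw [card_univ, Fintype.card_fin, nsmul_eq_mul, mul_comm]
          gcongr
      _ ≤ ∑ j, v j := Finset.card_nsmul_le_sum _ _ _ fun i _ => wmin_le hv i
  have htotal_upper : ∑ j, v j ≤ C * c₁ ^ (2 - β) * n := by
    rw [← tailSum_eq_sum (wmin_le hv)]
    calc tailSum v (wmin n v) ≤ C * n * wmin n v ^ (2 - β) :=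
          tailSum_le_of_tailF_le hβ hα₂.le hn hv hupper (hc₁.trans_le hmin) le_rfl
      _ ≤ C * n * c₁ ^ (2 - β) :=
          mul_le_mul_of_nonneg_left (Real.rpow_le_rpow_of_nonpos hc₁ hmin (by linarith))
            (by positivity)
      _ = C * c₁ ^ (2 - β) * n := by ring
  have htotal_pos : 0 < ∑ j, v j := lt_of_lt_of_le (by positivity) htotal_lower
  have hsum_nonneg : 0 ≤ tailSum v x :=
    (mul_nonneg hx.le (Nat.cast_nonneg _)).trans (mul_card_le_tailSum x)
  rw [sum_plp_filter_eq]
  constructor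
  · calc α₁ / (C * c₁ ^ (2 - β)) * x ^ (2 - β)
          = α₁ * n * x ^ (2 - β) / (C * c₁ ^ (2 - β) * n) := by field_simp
      _ ≤ tailSum v x / ∑ j, v j := by
          gcongr
          exact le_tailSum_of_le_tailF hn hx (htail x hx₁ hx₂).1
  · calc tailSum v x / ∑ j, v j ≤ C * n * x ^ (2 - β) / (c₁ * n) := by
          gcongr
          exact tailSum_le_of_tailF_le hβ hα₂.le hn hv hupper hx hx₁
      _ = C / c₁ * x ^ (2 - β) := by field_simp

end PowerLawWeights

/-- For power-law weights with exponent `β > 2` and the induced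
probabilities `pᵢ = wᵢ/∑ⱼwⱼ`, the probability that a random index `I ∼ p` has weight
at least `x` is `Θ(x^{2-β})`, uniformly for `x ∈ [w₁, wₙ]`. -/
theorem weighted_tail_theta (β α₁ α₂ : ℝ) (hβ : 2 < β)
    (w : (n : ℕ) → Fin n → ℝ) (hw : IsPowerLawFamily β α₁ α₂ w) :
    ∃ C₁ C₂ : ℝ, 0 < C₁ ∧ ∀ᶠ n : ℕ in atTop, ∀ x : ℝ,
      wmin n (w n) ≤ x → x ≤ wmax n (w n) →
      C₁ * x ^ (2 - β) ≤
          (∑ i ∈ Finset.univ.filter (fun i => x ≤ w n i), plp n (w n) i) ∧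
      (∑ i ∈ Finset.univ.filter (fun i => x ≤ w n i), plp n (w n) i)
          ≤ C₂ * x ^ (2 - β) := by
  obtain ⟨c₁, c₂, hc₁, hmin_ev⟩ := hw.wmin_theta
  have hα₂ : 0 < α₂ := hw.α₁_pos.trans_le hw.α₁_le_α₂
  refine ⟨α₁ / (tailSumConst β α₂ * c₁ ^ (2 - β)), tailSumConst β α₂ / c₁,
    div_pos hw.α₁_pos (mul_pos (tailSumConst_pos hβ hα₂) (Real.rpow_pos_of_pos hc₁ _)), ?_⟩
  filter_upwards [hmin_ev, eventually_gt_atTop 0] with n hmin hn x hx₁ hx₂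
  exact sum_plp_filter_bounds hβ hα₂ hn (hw.mono n) hc₁ hmin.1 (hw.tail n hn) hx₁ hx₂

end PLSAT
end
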